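/- Let $A$ be a commutative ring, $p, q \geq -1$ integers with $p + q \geq -1$. If $(a_n)_{n \geq 0}$ is a $p$-polynomial sequence in $A$ and $(b_n)_{n \geq 0}$ is a $q$-polynomial sequence in $A$, then $(a_n b_n)_{n \geq 0}$ is a $(p+q)$-polynomial sequence in $A$. -/
import Mathlib

/-- A sequence `a : ℕ → A` is `m`-polynomial (for an integer `m ≥ -1`) if
`∑_{i=0}^n (-1)^i C(n,i) • a i = 0` for every integer `n > m`. -/
def IsPolySeq {A : Type*} [AddCommGroup A] (m : ℤ) (a : ℕ → A) : Prop :=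
  ∀ n : ℕ, m < (n : ℤ) →
    ∑ i ∈ Finset.range (n + 1), ((-1 : ℤ) ^ i * (n.choose i : ℤ)) • a i = 0

open fwdDiff Function

private lemma sum_alt_eq {A : Type*} [AddCommGroup A] (a : ℕ → A) (n : ℕ) :
    ∑ i ∈ Finset.range (n + 1), ((-1 : ℤ) ^ i * (n.choose i : ℤ)) • a i
      = (-1 : ℤ) ^ n • ((Δ_[1])^[n] a 0) := by
  rw [fwdDiff_iter_eq_sum_shift, Finset.smul_sum]
  refine Finset.sum_congr rfl fun i hi => ?_
  have hin : i ≤ n := Nat.lt_succ_iff.mp (Finset.mem_range.mp hi)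
  rw [smul_smul]
  have h1 : (0 : ℕ) + i • (1 : ℕ) = i := by simp
  rw [h1]
  congr 1
  have h2 : n + (n - i) = i + 2 * (n - i) := by omega
  have : (-1 : ℤ) ^ n * ((-1) ^ (n - i) * (n.choose i : ℤ))
      = (-1 : ℤ) ^ (n + (n - i)) * (n.choose i : ℤ) := by rw [pow_add]; ring
  rw [this, h2, pow_add, pow_mul]
  simp

private lemma iter_shift {A : Type*} [AddCommGroup A] (a : ℕ → A) (k : ℕ) (n : ℕ) :
    (Δ_[1])^[k] (fun m => a (m + 1)) n = (Δ_[1])^[k] a (n + 1) := by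
  rw [fwdDiff_iter_eq_sum_shift, fwdDiff_iter_eq_sum_shift]
  refine Finset.sum_congr rfl fun i _ => ?_
  simp only [smul_eq_mul, mul_one]
  rw [show n + 1 + i = n + i + 1 by omega]

private lemma fwdDiff_iter_zero_fun {A : Type*} [AddCommGroup A] (N : ℕ) (n : ℕ) :
    (Δ_[1])^[N] (fun _ => (0 : A)) n = 0 := by
  rw [fwdDiff_iter_eq_sum_shift]
  simp

/-- Forward direction: an `m`-polynomial sequence has vanishing `(m+1).toNat`-th difference. -/
private lemma diff_vanish {A : Type*} [AddCommGroup A] {m : ℤ} (hm : -1 ≤ m) (a : ℕ → A)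
    (ha : IsPolySeq m a) : ∀ n, (Δ_[1])^[(m + 1).toNat] a n = 0 := by
  set M := (m + 1).toNat with hM
  have hMm : (M : ℤ) = m + 1 := by omega
  have h0 : ∀ k : ℕ, (Δ_[1])^[M + k] a 0 = 0 := by
    intro k
    have hgt : m < ((M + k : ℕ) : ℤ) := by push_cast; omega
    have := ha (M + k) hgt
    rw [sum_alt_eq] at this
    have := congrArg (fun x => ((-1 : ℤ) ^ (M + k)) • x) this
    simpa [smul_smul, ← pow_add, ← two_mul, pow_mul] using this
  intro n
  have key : (Δ_[1])^[M] a n = (Δ_[1])^[M] a (0 + n • (1:ℕ)) := by simp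
  rw [key, shift_eq_sum_fwdDiff_iter 1 ((Δ_[1])^[M] a) n 0]
  refine Finset.sum_eq_zero fun k _ => ?_
  have : (Δ_[1])^[k] ((Δ_[1])^[M] a) 0 = (Δ_[1])^[k + M] a 0 := by
    rw [Function.iterate_add_apply]
  rw [this]
  rw [(by omega : k + M = M + k), h0 k, smul_zero]

/-- Reverse direction. -/
private lemma vanish_poly {A : Type*} [AddCommGroup A] {m : ℤ} {M : ℕ} (hMm : (M : ℤ) ≤ m + 1)
    (a : ℕ → A) (ha : ∀ n, (Δ_[1])^[M] a n = 0) : IsPolySeq m a := by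
  intro n hn
  rw [sum_alt_eq]
  have hMn : M ≤ n := by omega
  have h3 : (Δ_[1])^[n] a 0 = (Δ_[1])^[n - M] ((Δ_[1])^[M] a) 0 := by
    rw [← Function.iterate_add_apply, Nat.sub_add_cancel hMn]
  rw [h3]
  have hz : (Δ_[1])^[M] a = fun _ => (0 : A) := funext ha
  rw [hz, fwdDiff_iter_zero_fun, smul_zero]

private lemma prod_vanish {A : Type*} [CommRing A] :
    ∀ N P Q : ℕ, ∀ a b : ℕ → A, P + Q = N + 1 →
      (∀ n, (Δ_[1])^[P] a n = 0) → (∀ n, (Δ_[1])^[Q] b n = 0) →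
      ∀ n, (Δ_[1])^[N] (fun k => a k * b k) n = 0 := by
  intro N
  induction N with
  | zero =>
    intro P Q a b hPQ ha hb n
    rcases Nat.eq_zero_or_pos P with hP | hP
    · subst hP
      have : ∀ k, a k = 0 := fun k => by simpa using ha k
      simp [this]
    · have hQ : Q = 0 := by omega
      subst hQ
      have : ∀ k, b k = 0 := fun k => by simpa using hb k
      simp [this]
  | succ N IH =>
    intro P Q a b hPQ ha hb n
    rcases Nat.eq_zero_or_pos P with hP | hP
    · subst hP
      have hz : (fun k => a k * b k) = fun _ => (0 : A) := by
        funext k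
        have : a k = 0 := by simpa using ha k
        simp [this]
      rw [hz]
      exact fwdDiff_iter_zero_fun _ _
    rcases Nat.eq_zero_or_pos Q with hQ | hQ
    · subst hQ
      have hz : (fun k => a k * b k) = fun _ => (0 : A) := by
        funext k
        have : b k = 0 := by simpa using hb k
        simp [this]
      rw [hz]
      exact fwdDiff_iter_zero_fun _ _
    obtain ⟨P', rfl⟩ : ∃ P', P = P' + 1 := ⟨P - 1, by omega⟩
    obtain ⟨Q', rfl⟩ : ∃ Q', Q = Q' + 1 := ⟨Q - 1, by omega⟩
    rw [Function.iterate_succ_apply]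
    have hsplit : (Δ_[1]) (fun k => a k * b k)
        = (fun k => a (k + 1) * ((Δ_[1]) b) k) + fun k => ((Δ_[1]) a) k * b k := by
      funext k
      simp only [fwdDiff, Pi.add_apply]
      ring
    rw [hsplit, fwdDiff_iter_add, Pi.add_apply]
    have h1 : (Δ_[1])^[N] (fun k => a (k + 1) * ((Δ_[1]) b) k) n = 0 := by
      refine IH (P' + 1) Q' (fun k => a (k + 1)) ((Δ_[1]) b) (by omega) ?_ ?_ n
      · intro k
        rw [iter_shift]
        exact ha _
      · intro k
        rw [← Function.iterate_succ_apply]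
        exact hb k
    have h2 : (Δ_[1])^[N] (fun k => ((Δ_[1]) a) k * b k) n = 0 := by
      refine IH P' (Q' + 1) ((Δ_[1]) a) b (by omega) ?_ hb n
      intro k
      rw [← Function.iterate_succ_apply]
      exact ha k
    rw [h1, h2, add_zero]

/-- **Lemma.** Let `A` be a commutative ring, `p, q ≥ -1` integers with `p + q ≥ -1`.
If `(a n)` is a `p`-polynomial sequence and `(b n)` is a `q`-polynomial sequence in `A`,
then the entrywise product `(a n * b n)` is a `(p+q)`-polynomial sequence. -/
theorem stmt13 {A : Type*} [CommRing A] (p q : ℤ) (hp : -1 ≤ p) (hq : -1 ≤ q)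
    (hpq : -1 ≤ p + q) (a b : ℕ → A) (ha : IsPolySeq p a) (hb : IsPolySeq q b) :
    IsPolySeq (p + q) (fun n => a n * b n) := by
  have hda := diff_vanish hp a ha
  have hdb := diff_vanish hq b hb
  refine vanish_poly (M := (p + q + 1).toNat) (by omega) _ ?_
  exact prod_vanish ((p + q + 1).toNat) ((p + 1).toNat) ((q + 1).toNat) a b (by omega) hda hdb
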